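/- arXiv:1805.06744 — 2 statements merged into one kernel-verified Lean document; each statement's English description precedes it below -/
import Mathlib

section
/- Theorem 3 (zero angular momentum case, algebraic form): Let C ⊆ ℝ³ be a bounded measurable set of positive Lebesgue measure |C| > 0, let a > 0, γ > 1, let I_C be a symmetric positive definite real 3×3 matrix, m_B > 0, m_F > 0, and m_S := m_B + m_F. Suppose ρ_s : C → ℝ is integrable with ρ_s(x) > 0 for all x ∈ C and ∫_C ρ_s = m_F, and ω_s, ξ_s ∈ ℝ³, c ∈ ℝ satisfy: (i) ρ_s(x)^{γ−1} = ((γ−1)/(2aγ))·(‖ω_s × x‖² − 2·((ω_s × ξ_s)·x)) + c for all x ∈ C; (ii) m_S·ξ_s = −ω_s × g(ρ_s); (iii) I(ρ_s)·ω_s = 0 (vanishing total angular momentum M₀ = 0). Then ω_s = 0, ξ_s = 0, and ρ_s(x) = m_F/|C| for all x ∈ C. -/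
/-! Pairing the angular-momentum equation `I(ρ) ω = 0` with `ω` gives
`ω ⬝ I_C ω + ω ⬝ (Ī(ρ) - I_g(ρ)) ω = 0`. By Lagrange's identity the quadratic form of `Ī(ρ)` is
`∫ ρ ‖ω × x‖²` and that of `I_g(ρ)` is `‖ω × g‖² / m_S`, where `ω × g = ∫ ρ (ω × x)`. Cauchy–Schwarz
for the weight `ρ`, of mass `m_F ≤ m_S`, makes `Ī(ρ) - I_g(ρ)` positive semidefinite, so positive
definiteness of `I_C` forces `ω = 0`. Then (ii) gives `ξ = 0`, (i) says that `ρ^(γ-1)` is constant,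
and the mass constraint identifies the constant as `m_F / |C|`. -/

open MeasureTheory Matrix
open scoped RealInnerProductSpace

noncomputable section

/-- The cross product on `ℝ³` (Euclidean space). -/
def cross3 (a b : EuclideanSpace ℝ (Fin 3)) : EuclideanSpace ℝ (Fin 3) :=
  WithLp.toLp 2 (crossProduct a b)

/-- `Ī(ρ) := ∫_C ρ(x)(‖x‖²·𝟙 − x ⊗ x) dx` (entrywise integral). -/
def Ibar (C : Set (EuclideanSpace ℝ (Fin 3))) (ρ : EuclideanSpace ℝ (Fin 3) → ℝ) :
    Matrix (Fin 3) (Fin 3) ℝ :=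
  Matrix.of fun i j =>
    ∫ x in C, ρ x * (‖x‖ ^ 2 * (if i = j then (1 : ℝ) else 0) - x i * x j)

/-- `g(ρ) := ∫_C ρ(x)·x dx`. -/
def gvec (C : Set (EuclideanSpace ℝ (Fin 3))) (ρ : EuclideanSpace ℝ (Fin 3) → ℝ) :
    EuclideanSpace ℝ (Fin 3) :=
  ∫ x in C, ρ x • x

/-- `I_g(ρ) := (1/m_S)·(‖g(ρ)‖²·𝟙 − g(ρ) ⊗ g(ρ))`. -/
def Ig (C : Set (EuclideanSpace ℝ (Fin 3))) (ρ : EuclideanSpace ℝ (Fin 3) → ℝ) (mS : ℝ) :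
    Matrix (Fin 3) (Fin 3) ℝ :=
  (1 / mS) • Matrix.of fun i j =>
    ‖gvec C ρ‖ ^ 2 * (if i = j then (1 : ℝ) else 0) - gvec C ρ i * gvec C ρ j

/-- `I(ρ) := I_C + Ī(ρ) − I_g(ρ)`, the central inertia tensor of the coupled system. -/
def Imat (IC : Matrix (Fin 3) (Fin 3) ℝ) (C : Set (EuclideanSpace ℝ (Fin 3)))
    (ρ : EuclideanSpace ℝ (Fin 3) → ℝ) (mS : ℝ) : Matrix (Fin 3) (Fin 3) ℝ :=
  IC + Ibar C ρ - Ig C ρ mS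

theorem sq_norm_integral_smul_le {α E : Type*} [MeasurableSpace α] {μ : Measure α}
    [NormedAddCommGroup E] [InnerProductSpace ℝ E] [CompleteSpace E] {ρ : α → ℝ} {v : α → E}
    (hρ_nonneg : 0 ≤ᵐ[μ] ρ) (hρ : Integrable ρ μ) (hρv : Integrable (fun x => ρ x • v x) μ)
    (hρv2 : Integrable (fun x => ρ x * ‖v x‖ ^ 2) μ) :
    ‖∫ x, ρ x • v x ∂μ‖ ^ 2 ≤ (∫ x, ρ x ∂μ) * ∫ x, ρ x * ‖v x‖ ^ 2 ∂μ := by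
  set G := ∫ x, ρ x • v x ∂μ
  set m := ∫ x, ρ x ∂μ
  set A := ∫ x, ρ x * ‖v x‖ ^ 2 ∂μ
  -- `0 ≤ ∫ ρ ‖v - t G‖²` is a quadratic inequality in `t`
  have hquad : ∀ t : ℝ, 0 ≤ (‖G‖ ^ 2 * m) * (t * t) + (-2 * ‖G‖ ^ 2) * t + A := by
    intro t
    have hexpand : ∀ x, ρ x * ‖v x - t • G‖ ^ 2
        = ρ x * ‖v x‖ ^ 2 - 2 * t * ⟪G, ρ x • v x⟫ + t ^ 2 * ‖G‖ ^ 2 * ρ x := by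
      intro x
      rw [norm_sub_sq_real, inner_smul_right, real_inner_comm, inner_smul_right, norm_smul,
        Real.norm_eq_abs, mul_pow, sq_abs]
      ring
    have hint : ∫ x, ρ x * ‖v x - t • G‖ ^ 2 ∂μ
        = A - 2 * t * ‖G‖ ^ 2 + t ^ 2 * ‖G‖ ^ 2 * m := by
      simp only [hexpand]
      have hinner := (hρv.const_inner G).const_mul (2 * t)
      rw [integral_add (f := fun x => ρ x * ‖v x‖ ^ 2 - 2 * t * ⟪G, ρ x • v x⟫)
          (hρv2.sub hinner) (hρ.const_mul _), integral_sub hρv2 hinner,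
        integral_const_mul, integral_const_mul, integral_inner hρv, real_inner_self_eq_norm_sq]
    have hnonneg : 0 ≤ ∫ x, ρ x * ‖v x - t • G‖ ^ 2 ∂μ :=
      integral_nonneg_of_ae (hρ_nonneg.mono fun x hx => mul_nonneg hx (sq_nonneg _))
    linarith
  have hdiscr := discrim_le_zero hquad
  have hm : 0 ≤ m := integral_nonneg_of_ae hρ_nonneg
  have hA : 0 ≤ A := integral_nonneg_of_ae (hρ_nonneg.mono fun x hx => mul_nonneg hx (sq_nonneg _))
  unfold discrim at hdiscr
  nlinarith [sq_nonneg ‖G‖, mul_nonneg hm hA]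

theorem eq_setIntegral_div_of_forall_mem_eq {α : Type*} [MeasurableSpace α] {μ : Measure α}
    {s : Set α} (hs : MeasurableSet s) (hμ₀ : μ s ≠ 0) (hμ : μ s ≠ ⊤) {f : α → ℝ} {k : ℝ}
    (hf : ∀ x ∈ s, f x = k) : k = (∫ x in s, f x ∂μ) / (μ s).toReal := by
  calc k = ⨍ _ in s, k ∂μ := (setAverage_const hμ₀ hμ k).symm
    _ = ⨍ x in s, f x ∂μ := setAverage_congr_fun hs (.of_forall fun x hx => (hf x hx).symm)
    _ = (∫ x in s, f x ∂μ) / (μ s).toReal := by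
      rw [setAverage_eq, smul_eq_mul, measureReal_def, inv_mul_eq_div]

theorem dotProduct_mulVec_integral {α n : Type*} [MeasurableSpace α] {μ : Measure α} [Fintype n]
    {F : α → Matrix n n ℝ} (hF : ∀ i j, Integrable (fun x => F x i j) μ) (v : n → ℝ) :
    v ⬝ᵥ (Matrix.of (fun i j => ∫ x, F x i j ∂μ) *ᵥ v) = ∫ x, v ⬝ᵥ (F x *ᵥ v) ∂μ := by
  simp only [dotProduct, mulVec, of_apply]
  rw [integral_finsetSum _ fun i _ =>
    (integrable_finsetSum _ fun j _ => (hF i j).mul_const _).const_mul _]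
  refine Finset.sum_congr rfl fun i _ => ?_
  rw [integral_const_mul, integral_finsetSum _ fun j _ => (hF i j).mul_const _]
  simp only [integral_mul_const]

local notation "ℝ³" => EuclideanSpace ℝ (Fin 3)

def crossLeft (ω : ℝ³) : ℝ³ →L[ℝ] ℝ³ :=
  LinearMap.toContinuousLinearMap ((WithLp.linearEquiv 2 ℝ (Fin 3 → ℝ)).symm.toLinearMap ∘ₗ
    crossProduct ω.ofLp ∘ₗ (WithLp.linearEquiv 2 ℝ (Fin 3 → ℝ)).toLinearMap)

theorem crossLeft_apply (ω x : ℝ³) : crossLeft ω x = cross3 ω x := rfl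

theorem cross3_zero_left (x : ℝ³) : cross3 0 x = 0 := by
  simp [cross3]

def pointInertia (y : ℝ³) : Matrix (Fin 3) (Fin 3) ℝ :=
  Matrix.of fun i j => ‖y‖ ^ 2 * (if i = j then (1 : ℝ) else 0) - y i * y j

theorem dotProduct_pointInertia_mulVec (ω y : ℝ³) :
    ω ⬝ᵥ (pointInertia y *ᵥ ω) = ‖cross3 ω y‖ ^ 2 := by
  rw [← real_inner_self_eq_norm_sq, EuclideanSpace.inner_eq_star_dotProduct]
  simp only [cross3, star_trivial, cross_dot_cross]
  rw [pointInertia, ← real_inner_self_eq_norm_sq, EuclideanSpace.inner_eq_star_dotProduct]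
  simp [dotProduct, mulVec, Fin.sum_univ_three]
  ring

theorem cross3_gvec {C : Set ℝ³} {ρ : ℝ³ → ℝ} (hρx : IntegrableOn (fun x => ρ x • x) C) (ω : ℝ³) :
    cross3 ω (gvec C ρ) = ∫ x in C, ρ x • cross3 ω x := by
  simp_rw [← crossLeft_apply, ← map_smul]
  exact ((crossLeft ω).integral_comp_comm hρx).symm

theorem dotProduct_Ibar_sub_Ig_mulVec_nonneg {C : Set ℝ³} (hC_meas : MeasurableSet C)
    (hC_bdd : Bornology.IsBounded C) {ρ : ℝ³ → ℝ} (hρ : IntegrableOn ρ C)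
    (hρ_nonneg : ∀ x ∈ C, 0 ≤ ρ x) {mS : ℝ} (hmS : 0 < mS) (hmass : ∫ x in C, ρ x ≤ mS)
    (ω : ℝ³) : 0 ≤ ω ⬝ᵥ ((Ibar C ρ - Ig C ρ mS) *ᵥ ω) := by
  have hK := hC_bdd.isCompact_closure
  have hρx : IntegrableOn (fun x => ρ x • x) C :=
    hρ.smul_continuousOn_of_subset continuous_id.continuousOn hC_meas hK subset_closure
  have hρJ : ∀ i j, IntegrableOn (fun x => (ρ x • pointInertia x) i j) C := fun i j =>
    hρ.mul_continuousOn_of_subset (by unfold pointInertia; fun_prop) hC_meas hK subset_closure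
  have hρω : IntegrableOn (fun x => ρ x * ‖cross3 ω x‖ ^ 2) C :=
    hρ.mul_continuousOn_of_subset ((crossLeft ω).continuous.norm.pow 2).continuousOn hC_meas hK
      subset_closure
  have hρωx : IntegrableOn (fun x => ρ x • cross3 ω x) C :=
    hρ.smul_continuousOn_of_subset (crossLeft ω).continuous.continuousOn hC_meas hK subset_closure
  have hρ_ae : 0 ≤ᵐ[volume.restrict C] ρ := ae_restrict_of_forall_mem hC_meas hρ_nonneg
  have hIbar : ω ⬝ᵥ (Ibar C ρ *ᵥ ω) = ∫ x in C, ρ x * ‖cross3 ω x‖ ^ 2 := by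
    rw [show Ibar C ρ = of fun i j => ∫ x in C, (ρ x • pointInertia x) i j from rfl,
      dotProduct_mulVec_integral hρJ]
    simp_rw [smul_mulVec, dotProduct_smul, dotProduct_pointInertia_mulVec, smul_eq_mul]
  have hIg : ω ⬝ᵥ (Ig C ρ mS *ᵥ ω) = ‖cross3 ω (gvec C ρ)‖ ^ 2 / mS := by
    rw [show Ig C ρ mS = (1 / mS) • pointInertia (gvec C ρ) from rfl, smul_mulVec,
      dotProduct_smul, dotProduct_pointInertia_mulVec, smul_eq_mul, one_div_mul_eq_div]
  have hCS : ‖cross3 ω (gvec C ρ)‖ ^ 2 ≤ (∫ x in C, ρ x) * ∫ x in C, ρ x * ‖cross3 ω x‖ ^ 2 := by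
    rw [cross3_gvec hρx]
    exact sq_norm_integral_smul_le hρ_ae hρ hρωx hρω
  have hA : 0 ≤ ∫ x in C, ρ x * ‖cross3 ω x‖ ^ 2 :=
    setIntegral_nonneg hC_meas fun x hx => mul_nonneg (hρ_nonneg x hx) (sq_nonneg _)
  rw [sub_mulVec, dotProduct_sub, hIbar, hIg, sub_nonneg, div_le_iff₀ hmS, mul_comm _ mS]
  exact hCS.trans (mul_le_mul_of_nonneg_right hmass hA)

theorem zero_angular_momentum_case_general (C : Set (EuclideanSpace ℝ (Fin 3)))
    (hC_meas : MeasurableSet C) (hC_bdd : Bornology.IsBounded C)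
    (hC_pos : 0 < volume C)
    (a γ : ℝ) (hγ : 1 < γ)
    (IC : Matrix (Fin 3) (Fin 3) ℝ) (hIC_posdef : IC.PosDef)
    (mB mF : ℝ) (hmB : 0 < mB) (hmF : 0 < mF) (mS : ℝ) (hmS : mS = mB + mF)
    (ρs : EuclideanSpace ℝ (Fin 3) → ℝ) (hρ_int : IntegrableOn ρs C)
    (hρ_pos : ∀ x ∈ C, 0 < ρs x) (hρ_mass : ∫ x in C, ρs x = mF)
    (ωs ξs : EuclideanSpace ℝ (Fin 3)) (c : ℝ)
    (h_i : ∀ x ∈ C, ρs x ^ (γ - 1) =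
      ((γ - 1) / (2 * a * γ)) * (‖cross3 ωs x‖ ^ 2 - 2 * ⟪cross3 ωs ξs, x⟫) + c)
    (h_ii : mS • ξs = -cross3 ωs (gvec C ρs))
    (h_iii : Imat IC C ρs mS *ᵥ ωs = 0) :
    ωs = 0 ∧ ξs = 0 ∧ ∀ x ∈ C, ρs x = mF / (volume C).toReal := by
  have hmS_pos : 0 < mS := by linarith
  have hω : ωs = 0 := by
    by_contra hω
    have hIC : 0 < ωs ⬝ᵥ (IC *ᵥ ωs) := by
      simpa using hIC_posdef.dotProduct_mulVec_pos (x := ωs.ofLp) (by simpa using hω)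
    have hrest := dotProduct_Ibar_sub_Ig_mulVec_nonneg hC_meas hC_bdd hρ_int
      (fun x hx => (hρ_pos x hx).le) hmS_pos (by linarith) ωs
    have hzero : ωs ⬝ᵥ (IC *ᵥ ωs) + ωs ⬝ᵥ ((Ibar C ρs - Ig C ρs mS) *ᵥ ωs) = 0 := by
      rw [← dotProduct_add, ← add_mulVec, ← add_sub_assoc, ← Imat, h_iii, dotProduct_zero]
    linarith
  have hξ : ξs = 0 := by
    rw [hω, cross3_zero_left, neg_zero, smul_eq_zero] at h_ii
    exact h_ii.resolve_left hmS_pos.ne'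
  have hρ_const : ∀ x ∈ C, ρs x = c ^ (γ - 1)⁻¹ := by
    intro x hx
    have hx_eq : ρs x ^ (γ - 1) = c := by simpa [hω, cross3_zero_left] using h_i x hx
    rw [← hx_eq, Real.rpow_rpow_inv (hρ_pos x hx).le (by linarith)]
  refine ⟨hω, hξ, fun x hx => ?_⟩
  rw [hρ_const x hx, ← hρ_mass]
  exact eq_setIntegral_div_of_forall_mem_eq hC_meas hC_pos.ne' hC_bdd.measure_lt_top.ne hρ_const

/-- **Theorem 3 (zero angular momentum case, algebraic form).** If the steady-state system
(3.10) holds with vanishing total angular momentum `I(ρ_s)·ω_s = 0`, then `ω_s = 0`, `ξ_s = 0`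
and `ρ_s` is the constant `m_F/|C|`. -/
theorem zero_angular_momentum_case (C : Set (EuclideanSpace ℝ (Fin 3)))
    (hC_meas : MeasurableSet C) (hC_bdd : Bornology.IsBounded C)
    (hC_pos : 0 < volume C)
    (a γ : ℝ) (ha : 0 < a) (hγ : 1 < γ)
    (IC : Matrix (Fin 3) (Fin 3) ℝ) (hIC_symm : IC.IsSymm) (hIC_posdef : IC.PosDef)
    (mB mF : ℝ) (hmB : 0 < mB) (hmF : 0 < mF) (mS : ℝ) (hmS : mS = mB + mF)
    (ρs : EuclideanSpace ℝ (Fin 3) → ℝ) (hρ_int : IntegrableOn ρs C)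
    (hρ_pos : ∀ x ∈ C, 0 < ρs x) (hρ_mass : ∫ x in C, ρs x = mF)
    (ωs ξs : EuclideanSpace ℝ (Fin 3)) (c : ℝ)
    (h_i : ∀ x ∈ C, ρs x ^ (γ - 1) =
      ((γ - 1) / (2 * a * γ)) * (‖cross3 ωs x‖ ^ 2 - 2 * ⟪cross3 ωs ξs, x⟫) + c)
    (h_ii : mS • ξs = -cross3 ωs (gvec C ρs))
    (h_iii : Imat IC C ρs mS *ᵥ ωs = 0) :
    ωs = 0 ∧ ξs = 0 ∧ ∀ x ∈ C, ρs x = mF / (volume C).toReal :=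
  zero_angular_momentum_case_general C hC_meas hC_bdd hC_pos a γ hγ IC hIC_posdef mB mF hmB hmF mS
    hmS ρs hρ_int hρ_pos hρ_mass ωs ξs c h_i h_ii h_iii
end
end

section
/- (Rigidity step in the proof of Lemma 8, equations (6.3)–(6.4)) Let C ⊆ ℝ³ be a nonempty open set, a > 0, γ > 1, and α, β, ω, ξ ∈ ℝ³. Let ρ : C → ℝ be twice continuously differentiable with ρ(x) > 0 for all x ∈ C, and suppose that for every x ∈ C: ρ(x)·(α × x + β) + ρ(x)·(ω × (ω × x + ξ)) + ∇(a·ρ^γ)(x) = 0, where ∇ denotes the gradient with respect to x of the function x ↦ a·ρ(x)^γ. Then α = 0. -/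
noncomputable section

open InnerProductSpace

abbrev E3 := EuclideanSpace ℝ (Fin 3)

lemma cross3_add (a u v : E3) : cross3 a (u + v) = cross3 a u + cross3 a v :=
  by simp only [cross3, WithLp.ofLp_add, map_add, WithLp.toLp_add]

lemma cross3_smul (a v : E3) (r : ℝ) : cross3 a (r • v) = r • cross3 a v :=
  by simp only [cross3, WithLp.ofLp_smul, map_smul, WithLp.toLp_smul]

def Amap (α ω : E3) : E3 →ₗ[ℝ] E3 where
  toFun v := cross3 α v + cross3 ω (cross3 ω v)
  map_add' u v := by
    rw [cross3_add, cross3_add, cross3_add]; abel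
  map_smul' r v := by
    rw [cross3_smul, cross3_smul, cross3_smul, RingHom.id_apply, smul_add]

def Bmap (α ω : E3) : E3 →ₗ[ℝ] (E3 →L[ℝ] ℝ) where
  toFun v := toDual ℝ E3 (Amap α ω v)
  map_add' u v := by simp
  map_smul' r v := by
    simp only [map_smul, RingHom.id_apply, LinearIsometryEquiv.map_smulₛₗ,
      starRingEnd_apply, star_trivial]

def f2 (α ω : E3) : E3 →L[ℝ] (E3 →L[ℝ] ℝ) := (Bmap α ω).toContinuousLinearMap

lemma hasFDerivAt_f1 (α β ω ξ : E3) (x₀ : E3) :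
    HasFDerivAt (fun y => toDual ℝ E3 (cross3 α y + β + cross3 ω (cross3 ω y + ξ)))
      (f2 α ω) x₀ := by
  have : (fun y => toDual ℝ E3 (cross3 α y + β + cross3 ω (cross3 ω y + ξ)))
      = fun y => f2 α ω y + toDual ℝ E3 (β + cross3 ω ξ) := by
    funext y
    rw [f2, LinearMap.coe_toContinuousLinearMap', Bmap]
    simp only [LinearMap.coe_mk, AddHom.coe_mk]
    rw [← map_add (toDual ℝ E3)]
    congr 1
    rw [Amap]
    simp only [LinearMap.coe_mk, AddHom.coe_mk]
    rw [cross3_add]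
    abel
  rw [this]
  exact ((f2 α ω).hasFDerivAt).add_const _

/-- **Rigidity step in the proof of Lemma 8 (equations (6.3)–(6.4)).** If `ρ > 0` is `C²` on a
nonempty open set `C ⊆ ℝ³` and
`ρ(x)·(α × x + β) + ρ(x)·(ω × (ω × x + ξ)) + ∇(a·ρ^γ)(x) = 0` on `C`, then `α = 0`. -/
theorem angular_acceleration_vanishes (C : Set (EuclideanSpace ℝ (Fin 3)))
    (hC_open : IsOpen C) (hC_ne : C.Nonempty)
    (a γ : ℝ) (ha : 0 < a) (hγ : 1 < γ)
    (α β ω ξ : EuclideanSpace ℝ (Fin 3))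
    (ρ : EuclideanSpace ℝ (Fin 3) → ℝ)
    (hρ_C2 : ContDiffOn ℝ 2 ρ C) (hρ_pos : ∀ x ∈ C, 0 < ρ x)
    (hmom : ∀ x ∈ C,
      ρ x • (cross3 α x + β) + ρ x • cross3 ω (cross3 ω x + ξ) +
        gradient (fun y => a * ρ y ^ γ) x = 0) :
    α = 0 := by
  classical
  obtain ⟨x₀, hx₀⟩ := hC_ne
  have hγ1 : γ - 1 ≠ 0 := sub_ne_zero.mpr (ne_of_gt hγ)
  set k : ℝ := a * γ / (γ - 1) with hk
  set w : E3 → ℝ := fun y => -k * ρ y ^ (γ - 1) with hw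
  set f' : E3 → (E3 →L[ℝ] ℝ) :=
    fun y => toDual ℝ E3 (cross3 α y + β + cross3 ω (cross3 ω y + ξ)) with hf'
  have key : ∀ x ∈ C, HasFDerivAt w (f' x) x := by
    intro x hx
    have hρx : 0 < ρ x := hρ_pos x hx
    have hdiff : DifferentiableAt ℝ ρ x :=
      (hρ_C2.contDiffAt (hC_open.mem_nhds hx)).differentiableAt two_ne_zero
    have hd : HasFDerivAt ρ (fderiv ℝ ρ x) x := hdiff.hasFDerivAt
    set g : E3 := (toDual ℝ E3).symm (fderiv ℝ ρ x) with hg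
    have hdg : toDual ℝ E3 g = fderiv ℝ ρ x := (toDual ℝ E3).apply_symm_apply _
    have hsmulg : ∀ s : ℝ, toDual ℝ E3 (s • g) = s • fderiv ℝ ρ x := by
      intro s
      rw [LinearIsometryEquiv.map_smulₛₗ, starRingEnd_apply, star_trivial, hdg]
    have hfγ : HasFDerivAt (fun y => ρ y ^ γ) ((γ * ρ x ^ (γ - 1)) • fderiv ℝ ρ x) x :=
      (Real.hasDerivAt_rpow_const (Or.inl hρx.ne')).comp_hasFDerivAt x hd
    have hfa : HasFDerivAt (fun y => a * ρ y ^ γ)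
        ((a * (γ * ρ x ^ (γ - 1))) • fderiv ℝ ρ x) x := by
      have := hfγ.const_mul a
      rwa [smul_smul] at this
    have hgradf : gradient (fun y => a * ρ y ^ γ) x = (a * (γ * ρ x ^ (γ - 1))) • g := by
      have hga : HasGradientAt (fun y => a * ρ y ^ γ) ((a * (γ * ρ x ^ (γ - 1))) • g) x := by
        rw [hasGradientAt_iff_hasFDerivAt, hsmulg]
        exact hfa
      exact hga.gradient
    have hm := hmom x hx
    rw [hgradf] at hm
    set V : E3 := cross3 α x + β + cross3 ω (cross3 ω x + ξ) with hV
    have hmV : ρ x • V + (a * (γ * ρ x ^ (γ - 1))) • g = 0 := by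
      rw [hV, smul_add]
      exact hm
    have hVg : V = (-(a * γ * ρ x ^ (γ - 2))) • g := by
      have hpow : ρ x * -(a * γ * ρ x ^ (γ - 2)) = -(a * (γ * ρ x ^ (γ - 1))) := by
        have h1 : ρ x ^ (γ - 1) = ρ x ^ (γ - 2) * ρ x := by
          rw [show γ - 1 = (γ - 2) + 1 by ring, Real.rpow_add hρx, Real.rpow_one]
        rw [h1]; ring
      have hcancel : ρ x • V = ρ x • ((-(a * γ * ρ x ^ (γ - 2))) • g) := by
        rw [smul_smul, hpow, neg_smul]
        exact eq_neg_of_add_eq_zero_left hmV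
      exact smul_right_injective E3 (ne_of_gt hρx) hcancel
    have hwγ : HasFDerivAt (fun y => ρ y ^ (γ - 1))
        (((γ - 1) * ρ x ^ (γ - 1 - 1)) • fderiv ℝ ρ x) x :=
      (Real.hasDerivAt_rpow_const (Or.inl hρx.ne')).comp_hasFDerivAt x hd
    have hwa : HasFDerivAt w ((-k * ((γ - 1) * ρ x ^ (γ - 2))) • fderiv ℝ ρ x) x := by
      have := hwγ.const_mul (-k)
      rwa [smul_smul, show γ - 1 - 1 = γ - 2 by ring] at this
    have hco : -k * ((γ - 1) * ρ x ^ (γ - 2)) = -(a * γ * ρ x ^ (γ - 2)) := by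
      rw [hk]; field_simp
    rw [hco] at hwa
    have hfx : f' x = (-(a * γ * ρ x ^ (γ - 2))) • fderiv ℝ ρ x := by
      rw [hf']
      simp only []
      rw [← hV, hVg, hsmulg]
    rw [hfx]
    exact hwa
  have hev : ∀ᶠ y in nhds x₀, HasFDerivAt w (f' y) y :=
    Filter.eventually_of_mem (hC_open.mem_nhds hx₀) key
  have hfd : HasFDerivAt f' (f2 α ω) x₀ := by
    rw [hf']; exact hasFDerivAt_f1 α β ω ξ x₀
  have hsec := second_derivative_symmetric_of_eventually hev hfd
  have hS : ∀ i j : Fin 3,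
      (Amap α ω (EuclideanSpace.single i 1)) j = (Amap α ω (EuclideanSpace.single j 1)) i := by
    intro i j
    have h := hsec (EuclideanSpace.single i 1) (EuclideanSpace.single j 1)
    simp only [f2, LinearMap.coe_toContinuousLinearMap', Bmap, LinearMap.coe_mk,
      AddHom.coe_mk, toDual_apply_apply, EuclideanSpace.inner_single_right, one_mul,
      starRingEnd_apply, star_trivial] at h
    exact h
  have hA : ∀ i j : Fin 3, (Amap α ω (EuclideanSpace.single i 1)) j
      = cross3 α (EuclideanSpace.single i 1) j
        + cross3 ω (cross3 ω (EuclideanSpace.single i 1)) j := by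
    intro i j
    rw [Amap]
    simp only [LinearMap.coe_mk, AddHom.coe_mk, PiLp.add_apply]
  have hcross : ∀ (u b : E3) (j : Fin 3), cross3 u b j =
      ![u 1 * b 2 - u 2 * b 1, u 2 * b 0 - u 0 * b 2, u 0 * b 1 - u 1 * b 0] j := by
    intro u b j
    rw [cross3, WithLp.ofLp_toLp, cross_apply]
  have h01 := hS 0 1
  have h02 := hS 0 2
  have h12 := hS 1 2
  rw [hA, hA] at h01 h02 h12
  simp only [hcross, EuclideanSpace.single_apply] at h01 h02 h12
  norm_num [Fin.ext_iff, Matrix.cons_val_two, Matrix.tail_cons, Matrix.head_cons] at h01 h02 h12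
  ext i
  fin_cases i
  · show α 0 = 0
    linarith
  · show α 1 = 0
    linarith
  · show α 2 = 0
    linarith
end
end
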